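/- arXiv:2306.06342 — 2 statements merged into one kernel-verified Lean document; each statement's English description precedes it below -/
import Mathlib

section
/- Marginal coverage of hierarchical conformal prediction (HCP), lower bound: Suppose the groups Z̃_1,…,Z̃_{K+1} satisfy hierarchical exchangeability, the HCP prediction set Ĉ at level α ∈ (0,1) is constructed from the training groups Z̃_1,…,Z̃_{K₀} and calibration groups Z̃_{K₀+1},…,Z̃_K, and the test point is (X_test, Y_test) = Z_{K+1,1}, the first observation of group K+1. Then P(Y_test ∈ Ĉ(X_test)) ≥ 1 − α. -/
/-!
Pass to the law `Q` of the configuration of all `K + 1` groups and compare the HCP measure with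
its oracle version, in which the test group takes the place of the point mass at `+∞`. If the
test score exceeds the threshold, the oracle measure puts mass `β = 1 - α` strictly below it.
By exchangeability within the test group, this event has the probability of the expected share
of test observations with the same property; by exchangeability of the groups, that expectation
is the same for every held-out group. Averaged over the groups it becomes the expected oracle
mass of the points whose strict lower tail carries mass `β`, and for any measure of total mass
at most one this mass is at most `1 - β`.
-/

open MeasureTheory ProbabilityTheory
open scoped ENNReal

noncomputable section

/-- Extend a permutation of `Fin m` to `ℕ` by the identity outside `{0, …, m-1}`. -/
def permExt {m : ℕ} (σ : Equiv.Perm (Fin m)) : ℕ → ℕ :=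
  fun i => if h : i < m then (σ ⟨i, h⟩ : ℕ) else i

/-- The representation of the groups `0, …, L-1` of a hierarchical data set:
group `k` is recorded as the pair of its size `N k ω` and its sequence of observations. -/
def hierData {Ω 𝒵 : Type*} (L : ℕ) (N : ℕ → Ω → ℕ) (Z : ℕ → ℕ → Ω → 𝒵) :
    Ω → Fin L → ℕ × (ℕ → 𝒵) :=
  fun ω k => (N k.1 ω, fun i => Z k.1 i ω)

/-- Hierarchical exchangeability (Definition 1.1) of the groups `0, …, L-1`:
(i) the groups are exchangeable with each other, and (ii) for each `k` and each `m`
with `P(N_k = m) > 0`, conditionally on `N_k = m` the first `m` observations within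
group `k` are exchangeable. -/
def HierExch {Ω 𝒵 : Type*} [MeasurableSpace Ω] [MeasurableSpace 𝒵] (L : ℕ)
    (P : Measure Ω) (N : ℕ → Ω → ℕ) (Z : ℕ → ℕ → Ω → 𝒵) : Prop :=
  (∀ σ : Equiv.Perm (Fin L),
      Measure.map (fun ω => fun k : Fin L => hierData L N Z ω (σ k)) P
        = Measure.map (hierData L N Z) P) ∧
  (∀ k, k < L → ∀ m : ℕ, 0 < P {ω | N k ω = m} → ∀ σ : Equiv.Perm (Fin m),
      Measure.map
          (hierData L N fun k' i => if k' = k then Z k' (permExt σ i) else Z k' i)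
          (ProbabilityTheory.cond P {ω | N k ω = m})
        = Measure.map (hierData L N Z) (ProbabilityTheory.cond P {ω | N k ω = m}))

/-- The `(1-β)`-quantile `Q_{1-β}(μ) = inf {t : μ((-∞, t]) ≥ 1-β}` of a distribution `μ`
on the extended real line. -/
def erealQuantile (β : ℝ) (μ : Measure EReal) : EReal :=
  sInf {t : EReal | ENNReal.ofReal β ≤ μ (Set.Iic t)}

/-- The HCP threshold: the `(1-α)`-quantile of the weighted empirical distribution
`Σ_{k=K₀}^{K-1} Σ_{i<n k} (1/((K₁+1)·(n k))) δ_{sc k i} + (1/(K₁+1)) δ_{+∞}`,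
where `K₁ = K - K₀`. -/
def hcpThreshold (α : ℝ) (K₀ K : ℕ) (n : ℕ → ℕ) (sc : ℕ → ℕ → ℝ) : EReal :=
  erealQuantile (1 - α)
    ((∑ k ∈ Finset.Ico K₀ K, ∑ i ∈ Finset.range (n k),
        (((K - K₀ + 1 : ℕ) : ℝ≥0∞) * (n k : ℝ≥0∞))⁻¹ • Measure.dirac ((sc k i : EReal)))
      + (((K - K₀ + 1 : ℕ) : ℝ≥0∞))⁻¹ • Measure.dirac (⊤ : EReal))

open Set Finset

section Quantile

variable {α : Type*} [CompleteLinearOrder α] [DenselyOrdered α] [TopologicalSpace α]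
  [OrderTopology α] [FirstCountableTopology α] [MeasurableSpace α] [OpensMeasurableSpace α]

theorem measure_setOf_le_measure_Iio_le (μ : Measure α) (hμ : μ univ ≤ 1) (β : ℝ≥0∞) :
    μ {x | β ≤ μ (Iio x)} ≤ 1 - β := by
  set S := {x | β ≤ μ (Iio x)}
  have : IsFiniteMeasure μ := ⟨hμ.trans_lt ENNReal.one_lt_top⟩
  have bound : ∀ E, MeasurableSet E → S ⊆ Eᶜ → β ≤ μ E → μ S ≤ 1 - β := fun E hE hSE hβ =>
    calc μ S ≤ μ Eᶜ := measure_mono hSE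
      _ = μ univ - μ E := measure_compl hE (measure_ne_top μ E)
      _ ≤ 1 - β := tsub_le_tsub hμ hβ
  have upper : ∀ {x y}, x ∈ S → x ≤ y → y ∈ S := fun hx hxy =>
    hx.trans (measure_mono (Iio_subset_Iio hxy))
  set t := sInf S
  by_cases ht : t ∈ S
  · exact bound (Iio t) measurableSet_Iio (fun y hy => not_lt.2 (sInf_le hy)) ht
  rcases S.eq_empty_or_nonempty with hS | ⟨y, hy⟩
  · simp [hS]
  refine bound (Iic t) measurableSet_Iic
    (fun x hx => not_le.2 ((sInf_le hx).lt_of_ne fun h : t = x => ht (h ▸ hx))) ?_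
  -- `t ∉ S` makes `S = Ioi t`, so `μ (Iic t)` is the limit of `μ (Iio r) ≥ β` as `r ↓ t`.
  have hgt : ∀ r, t < r → r ∈ S := fun r hr =>
    let ⟨x, hx, hxr⟩ := sInf_lt_iff.1 hr
    upper hx hxr.le
  have hty : t < y := (sInf_le hy).lt_of_ne fun h : t = y => ht (h ▸ hy)
  have := nhdsGT_neBot_of_exists_gt ⟨y, hty⟩
  have hlim := tendsto_measure_biInter_gt (μ := μ) (s := Iio) (a := t)
    (fun r _ => measurableSet_Iio.nullMeasurableSet) (fun _ _ _ h => Iio_subset_Iio h)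
    ⟨y, hty, measure_ne_top μ _⟩
  have hinter : (⋂ r > t, Iio r) = Iic t := by
    ext x
    simp only [mem_iInter, Set.mem_Iio, Set.mem_Iic]
    exact ⟨fun h => le_of_forall_gt_imp_ge_of_dense fun r hr => (h r hr).le,
      fun hx r hr => hx.trans_lt hr⟩
  rw [hinter] at hlim
  exact ge_of_tendsto hlim (eventually_nhdsWithin_of_forall hgt)

end Quantile

theorem le_erealQuantile_of_measure_Iio_lt {β : ℝ} {μ : Measure EReal} {x : EReal}
    (h : μ (Iio x) < ENNReal.ofReal β) : x ≤ erealQuantile β μ :=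
  le_sInf fun _ ht => not_lt.1 fun htx =>
    (measure_mono (Iic_subset_Iio.2 htx)).not_gt (h.trans_le ht)

/-- With `c = K - K₀ + 1` and `I = Ico K₀ K`, this is the calibration part of the measure
whose quantile is `hcpThreshold`. -/
def scoreMeasure {ι : Type*} (c : ℕ) (I : Finset ι) (n : ι → ℕ) (s : ι → ℕ → ℝ) :
    Measure EReal :=
  ∑ k ∈ I, ∑ i ∈ range (n k), ((c : ℝ≥0∞) * (n k : ℝ≥0∞))⁻¹ • Measure.dirac (s k i : EReal)

section ScoreMeasure

variable {ι : Type*} (c : ℕ) (n : ι → ℕ) (s : ι → ℕ → ℝ)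

theorem scoreMeasure_apply (I : Finset ι) (E : Set EReal) :
    scoreMeasure c I n s E =
      ∑ k ∈ I, ∑ i ∈ range (n k), ((c : ℝ≥0∞) * n k)⁻¹ * E.indicator 1 (s k i : EReal) := by
  simp only [scoreMeasure, Measure.finsetSum_apply, Measure.smul_apply, Measure.dirac_apply,
    smul_eq_mul]

theorem scoreMeasure_apply_mono {I J : Finset ι} (hIJ : I ⊆ J) (E : Set EReal) :
    scoreMeasure c I n s E ≤ scoreMeasure c J n s E := by
  simp only [scoreMeasure_apply]
  exact sum_le_sum_of_subset hIJ

theorem scoreMeasure_univ_le_one {I : Finset ι} (hI : #I ≤ c) :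
    scoreMeasure c I n s univ ≤ 1 :=
  calc scoreMeasure c I n s univ = ∑ k ∈ I, (n k : ℝ≥0∞) * ((c : ℝ≥0∞) * n k)⁻¹ := by
        simp [scoreMeasure_apply]
    _ ≤ ∑ _k ∈ I, (c : ℝ≥0∞)⁻¹ := by
        refine sum_le_sum fun k _ => ?_
        rw [ENNReal.mul_inv (.inr (ENNReal.natCast_ne_top _)) (.inl (ENNReal.natCast_ne_top _)),
          mul_left_comm]
        exact mul_le_of_le_one_right' (ENNReal.mul_inv_le_one _)
    _ ≤ 1 := by
        rw [sum_const, nsmul_eq_mul]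
        exact (mul_le_mul_left (by exact_mod_cast hI) _).trans (ENNReal.mul_inv_le_one _)

end ScoreMeasure

theorem Measurable.of_nat_index {α β : Type*} [MeasurableSpace α] [MeasurableSpace β]
    {n : α → ℕ} (hn : Measurable n) {F : ℕ → α → β} (hF : ∀ m, Measurable (F m)) :
    Measurable fun x => F (n x) x :=
  (measurable_from_prod_countable_left (f := fun p : α × ℕ => F p.2 p.1) hF).comp
    (measurable_id.prodMk hn)

theorem lintegral_inv_mul_sum_range_eq {α : Type*} [MeasurableSpace α] (μ : Measure α)
    {n : α → ℕ} (hn : Measurable n) (hn0 : μ {x | n x = 0} = 0)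
    {f : ℕ → α → ℝ≥0∞} (hf : ∀ j, Measurable (f j))
    (hinv : ∀ m, ∀ j < m, ∫⁻ x in {x | n x = m}, f j x ∂μ = ∫⁻ x in {x | n x = m}, f 0 x ∂μ) :
    ∫⁻ x, (n x : ℝ≥0∞)⁻¹ * ∑ j ∈ range (n x), f j x ∂μ = ∫⁻ x, f 0 x ∂μ := by
  have hlevel : ∀ m, MeasurableSet {x | n x = m} := fun m => hn (measurableSet_singleton m)
  have hsplit : ∀ g : α → ℝ≥0∞, ∫⁻ x, g x ∂μ = ∑' m, ∫⁻ x in {x | n x = m}, g x ∂μ := by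
    intro g
    rw [← lintegral_iUnion hlevel, iUnion_eq_univ_iff.2 fun x => ⟨n x, rfl⟩,
      Measure.restrict_univ]
    exact fun m m' hmm' => disjoint_left.2 fun x (hm : n x = m) (hm' : n x = m') =>
      hmm' (hm.symm.trans hm')
  rw [hsplit, hsplit]
  refine tsum_congr fun m => ?_
  rw [setLIntegral_congr_fun (hlevel m) (g := fun x => (m : ℝ≥0∞)⁻¹ * ∑ j ∈ range m, f j x)
    fun x (hx : n x = m) => by rw [hx]]
  rcases Nat.eq_zero_or_pos m with rfl | hm
  · simp [Measure.restrict_eq_zero.2 hn0]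
  rw [lintegral_const_mul _ (Finset.measurable_sum _ fun j _ => hf j),
    lintegral_finsetSum _ fun j _ => hf j, sum_congr rfl fun j hj => hinv m j (mem_range.1 hj),
    sum_const, card_range, nsmul_eq_mul, ← mul_assoc,
    ENNReal.inv_mul_cancel (by exact_mod_cast hm.ne') (ENNReal.natCast_ne_top m), one_mul]

theorem sum_range_permExt {M : Type*} [AddCommMonoid M] {m : ℕ} (τ : Equiv.Perm (Fin m))
    (f : ℕ → M) : ∑ i ∈ range m, f (permExt τ i) = ∑ i ∈ range m, f i := by
  rw [← Fin.sum_univ_eq_sum_range (fun i => f (permExt τ i)), ← Fin.sum_univ_eq_sum_range f,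
    ← Equiv.sum_comp τ fun i : Fin m => f i]
  exact sum_congr rfl fun i _ => by simp [permExt]

section Configurations

variable {𝒵 : Type*}

def permuteWithin {L m : ℕ} (τ : Equiv.Perm (Fin m)) (k : Fin L)
    (d : Fin L → ℕ × (ℕ → 𝒵)) : Fin L → ℕ × (ℕ → 𝒵) :=
  Function.update d k ((d k).1, (d k).2 ∘ permExt τ)

theorem hierData_permuteWithin {Ω : Type*} {L m : ℕ} (N : ℕ → Ω → ℕ) (Z : ℕ → ℕ → Ω → 𝒵)
    (τ : Equiv.Perm (Fin m)) (k : Fin L) (ω : Ω) :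
    hierData L N (fun k' i => if k' = k then Z k' (permExt τ i) else Z k' i) ω
      = permuteWithin τ k (hierData L N Z ω) := by
  funext k'
  by_cases h : k' = k
  · subst h
    simp only [hierData, permuteWithin, Function.update_self, if_pos]
    rfl
  · simp [hierData, permuteWithin, Function.update_of_ne h, Fin.val_ne_of_ne h]

variable [MeasurableSpace 𝒵]

theorem measurable_permuteWithin {L m : ℕ} (τ : Equiv.Perm (Fin m)) (k : Fin L) :
    Measurable (permuteWithin (𝒵 := 𝒵) τ k) := by
  unfold permuteWithin
  fun_prop

theorem measurableSet_size_eq {L : ℕ} (k : Fin L) (m : ℕ) :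
    MeasurableSet {d : Fin L → ℕ × (ℕ → 𝒵) | (d k).1 = m} :=
  (measurable_fst.comp (measurable_pi_apply k)) (measurableSet_singleton m)

theorem measurable_comp_perm {L : ℕ} (σ : Equiv.Perm (Fin L)) :
    Measurable fun d : Fin L → ℕ × (ℕ → 𝒵) => d ∘ σ :=
  measurable_pi_lambda _ fun k => measurable_pi_apply (σ k)

theorem measurable_hierData {Ω : Type*} [MeasurableSpace Ω] {L : ℕ} {N : ℕ → Ω → ℕ}
    {Z : ℕ → ℕ → Ω → 𝒵} (hN : ∀ k, Measurable (N k)) (hZ : ∀ k i, Measurable (Z k i)) :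
    Measurable (hierData L N Z) :=
  measurable_pi_lambda _ fun k => (hN k).prodMk (measurable_pi_lambda _ fun i => hZ k i)

namespace HierExch

variable {Ω : Type*} [MeasurableSpace Ω] {L : ℕ} {P : Measure Ω} {N : ℕ → Ω → ℕ}
  {Z : ℕ → ℕ → Ω → 𝒵}

theorem map_comp_perm (h : HierExch L P N Z) (hN : ∀ k, Measurable (N k))
    (hZ : ∀ k i, Measurable (Z k i)) (σ : Equiv.Perm (Fin L)) :
    (P.map (hierData L N Z)).map (· ∘ σ) = P.map (hierData L N Z) := by
  rw [Measure.map_map (measurable_comp_perm σ) (measurable_hierData hN hZ)]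
  exact h.1 σ

theorem map_restrict_permuteWithin [IsFiniteMeasure P] (h : HierExch L P N Z)
    (hN : ∀ k, Measurable (N k)) (hZ : ∀ k i, Measurable (Z k i)) (k : Fin L) (m : ℕ) (τ : Equiv.Perm (Fin m)) :
    ((P.map (hierData L N Z)).restrict {d | (d k).1 = m}).map (permuteWithin τ k)
      = (P.map (hierData L N Z)).restrict {d | (d k).1 = m} := by
  have hH := measurable_hierData (L := L) hN hZ
  rw [Measure.restrict_map hH (measurableSet_size_eq k m),
    Measure.map_map (measurable_permuteWithin τ k) hH]
  change (P.restrict {ω | N k ω = m}).map _ = (P.restrict {ω | N k ω = m}).map _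
  rcases eq_zero_or_pos (P {ω | N k ω = m}) with h0 | hpos
  · simp [Measure.restrict_eq_zero.2 h0]
  have hcond : P.restrict {ω | N k ω = m} = P {ω | N k ω = m} • P[|{ω | N k ω = m}] := by
    rw [ProbabilityTheory.cond, smul_smul,
      ENNReal.mul_inv_cancel hpos.ne' (measure_ne_top P _), one_smul]
  have hperm : permuteWithin τ k ∘ hierData L N Z
      = hierData L N fun k' i => if k' = k.1 then Z k' (permExt τ i) else Z k' i := by
    funext ω
    exact (hierData_permuteWithin N Z τ k ω).symm
  rw [hcond, Measure.map_smul, Measure.map_smul, hperm, h.2 k k.2 m hpos τ]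

end HierExch

end Configurations

/-- The calibration groups together with the test group. -/
def heldOutGroups (K₀ L : ℕ) : Finset (Fin L) :=
  univ.filter fun k => K₀ ≤ (k : ℕ)

theorem map_val_heldOutGroups (K₀ L : ℕ) :
    (heldOutGroups K₀ L).map Fin.valEmbedding = Finset.Ico K₀ L := by
  ext k
  simp only [heldOutGroups, Finset.mem_map, Finset.mem_filter, Finset.mem_univ, true_and,
    Fin.valEmbedding_apply, Finset.mem_Ico]
  exact ⟨fun ⟨k', hk', hk⟩ => hk ▸ ⟨hk', k'.2⟩, fun ⟨h₀, h₁⟩ => ⟨⟨k, h₁⟩, h₀, rfl⟩⟩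

theorem card_heldOutGroups (K₀ L : ℕ) : #(heldOutGroups K₀ L) = L - K₀ := by
  rw [← card_map Fin.valEmbedding, map_val_heldOutGroups, Nat.card_Ico]

theorem scoreMeasure_map {ι κ : Type*} (c : ℕ) (I : Finset ι) (e : ι ↪ κ) (n : κ → ℕ)
    (s : κ → ℕ → ℝ) : scoreMeasure c (I.map e) n s = scoreMeasure c I (n ∘ e) (s ∘ e) :=
  sum_map I e _

theorem scoreMeasure_comp_perm {ι : Type*} (c : ℕ) (I : Finset ι) (n : ι → ℕ)
    (s : ι → ℕ → ℝ) {σ : Equiv.Perm ι} (hσ : {k | σ k ≠ k} ⊆ I) :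
    scoreMeasure c I (n ∘ σ) (s ∘ σ) = scoreMeasure c I n s :=
  Equiv.Perm.sum_comp σ I
    (fun k => ∑ i ∈ range (n k), ((c : ℝ≥0∞) * n k)⁻¹ • Measure.dirac (s k i : EReal)) hσ

section HeldOut

variable {𝒵 : Type*} {K₀ K : ℕ} (S : (Fin (K + 1) → ℕ × (ℕ → 𝒵)) → 𝒵 → ℝ)

/-- The oracle version of the HCP measure: the test group takes the place of the point mass
at `+∞`. -/
def fullScoreMeasure (d : Fin (K + 1) → ℕ × (ℕ → 𝒵)) : Measure EReal :=
  scoreMeasure (K - K₀ + 1) (heldOutGroups K₀ (K + 1)) (fun k => (d k).1)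
    fun k i => S d ((d k).2 i)

def highRankSet (β : ℝ≥0∞) (k : Fin (K + 1)) (j : ℕ) : Set (Fin (K + 1) → ℕ × (ℕ → 𝒵)) :=
  {d | β ≤ fullScoreMeasure (K₀ := K₀) S d (Iio (S d ((d k).2 j) : EReal))}

def highRankFraction (β : ℝ≥0∞) (k : Fin (K + 1)) (d : Fin (K + 1) → ℕ × (ℕ → 𝒵)) : ℝ≥0∞ :=
  ((d k).1 : ℝ≥0∞)⁻¹ * ∑ j ∈ range (d k).1, (highRankSet (K₀ := K₀) S β k j).indicator 1 d

theorem sum_highRankFraction_le (β : ℝ≥0∞) (d : Fin (K + 1) → ℕ × (ℕ → 𝒵)) :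
    ∑ k ∈ heldOutGroups K₀ (K + 1),
        ((K - K₀ + 1 : ℕ) : ℝ≥0∞)⁻¹ * highRankFraction (K₀ := K₀) S β k d ≤ 1 - β := by
  set μ := fullScoreMeasure (K₀ := K₀) S d
  calc _ = μ {x | β ≤ μ (Iio x)} := by
        change _ = scoreMeasure _ _ _ _ _
        rw [scoreMeasure_apply]
        simp only [highRankFraction, mul_sum]
        refine sum_congr rfl fun k _ => sum_congr rfl fun j _ => ?_
        rw [ENNReal.mul_inv (.inr (ENNReal.natCast_ne_top _)) (.inl (ENNReal.natCast_ne_top _)),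
          mul_assoc]
        rfl
    _ ≤ 1 - β := measure_setOf_le_measure_Iio_le μ
        (scoreMeasure_univ_le_one _ _ _ (by rw [card_heldOutGroups]; omega)) β

section Invariance

variable {S} {d : Fin (K + 1) → ℕ × (ℕ → 𝒵)}

theorem fullScoreMeasure_comp_perm {σ : Equiv.Perm (Fin (K + 1))}
    (hσ : ∀ j : Fin (K + 1), (j : ℕ) < K₀ → σ j = j) (hS : S (d ∘ σ) = S d) :
    fullScoreMeasure (K₀ := K₀) S (d ∘ σ) = fullScoreMeasure (K₀ := K₀) S d := by
  have hsupp : {k | σ k ≠ k} ⊆ (heldOutGroups K₀ (K + 1) : Set (Fin (K + 1))) := fun k hk => by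
    simp only [heldOutGroups, coe_filter, Finset.mem_univ, true_and, Set.mem_ofPred_eq]
    exact not_lt.1 fun h => hk (hσ k h)
  unfold fullScoreMeasure
  rw [hS]
  exact scoreMeasure_comp_perm _ _ (fun k => (d k).1) (fun k i => S d ((d k).2 i)) hsupp

theorem comp_perm_mem_highRankSet_iff {σ : Equiv.Perm (Fin (K + 1))}
    (hσ : ∀ j : Fin (K + 1), (j : ℕ) < K₀ → σ j = j) (hS : S (d ∘ σ) = S d)
    (β : ℝ≥0∞) (k : Fin (K + 1)) (j : ℕ) :
    d ∘ σ ∈ highRankSet (K₀ := K₀) S β k j ↔ d ∈ highRankSet (K₀ := K₀) S β (σ k) j := by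
  simp only [highRankSet, Set.mem_ofPred_eq, fullScoreMeasure_comp_perm hσ hS, hS,
    Function.comp_apply]

theorem highRankFraction_comp_perm {σ : Equiv.Perm (Fin (K + 1))}
    (hσ : ∀ j : Fin (K + 1), (j : ℕ) < K₀ → σ j = j) (hS : S (d ∘ σ) = S d)
    (β : ℝ≥0∞) (k : Fin (K + 1)) :
    highRankFraction (K₀ := K₀) S β k (d ∘ σ) = highRankFraction (K₀ := K₀) S β (σ k) d := by
  simp only [highRankFraction, Function.comp_apply]
  congr 1
  exact sum_congr rfl fun j _ => indicator_const_eq_indicator_const (c := (1 : ℝ≥0∞))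
    (comp_perm_mem_highRankSet_iff hσ hS β k j)

theorem fullScoreMeasure_permuteWithin {m : ℕ} (τ : Equiv.Perm (Fin m)) {k : Fin (K + 1)}
    (hm : (d k).1 = m) (hS : S (permuteWithin τ k d) = S d) :
    fullScoreMeasure (K₀ := K₀) S (permuteWithin τ k d) = fullScoreMeasure (K₀ := K₀) S d := by
  unfold fullScoreMeasure scoreMeasure
  rw [hS]
  refine sum_congr rfl fun k' _ => ?_
  by_cases h : k' = k
  · subst h
    simp only [permuteWithin, Function.update_self, Function.comp_apply, hm]
    exact sum_range_permExt τ fun i =>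
      (((K - K₀ + 1 : ℕ) : ℝ≥0∞) * m)⁻¹ • Measure.dirac (S d ((d k').2 i) : EReal)
  · simp only [permuteWithin, Function.update_of_ne h]

theorem permuteWithin_mem_highRankSet_iff {m : ℕ} (τ : Equiv.Perm (Fin m)) {k : Fin (K + 1)}
    (hm : (d k).1 = m) (hS : S (permuteWithin τ k d) = S d) (β : ℝ≥0∞) (j : ℕ) :
    permuteWithin τ k d ∈ highRankSet (K₀ := K₀) S β k j
      ↔ d ∈ highRankSet (K₀ := K₀) S β k (permExt τ j) := by
  simp only [highRankSet, Set.mem_ofPred_eq]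
  rw [fullScoreMeasure_permuteWithin τ hm hS, hS]
  simp only [permuteWithin, Function.update_self, Function.comp_apply]

end Invariance

end HeldOut

section Measurability

variable {𝒵 : Type*} [MeasurableSpace 𝒵] {K₀ K : ℕ} {S : (Fin (K + 1) → ℕ × (ℕ → 𝒵)) → 𝒵 → ℝ}
  (hS : Measurable fun p : (Fin (K + 1) → ℕ × (ℕ → 𝒵)) × 𝒵 => S p.1 p.2)
include hS

theorem measurable_score (k : Fin (K + 1)) (i : ℕ) :
    Measurable fun d : Fin (K + 1) → ℕ × (ℕ → 𝒵) => S d ((d k).2 i) :=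
  hS.comp (measurable_id.prodMk ((measurable_pi_apply i).comp
    (measurable_snd.comp (measurable_pi_apply k))))

theorem measurableSet_highRankSet (β : ℝ≥0∞) (k : Fin (K + 1)) (j : ℕ) :
    MeasurableSet (highRankSet (K₀ := K₀) S β k j) := by
  refine measurableSet_le measurable_const ?_
  simp only [fullScoreMeasure, scoreMeasure_apply, Set.indicator_apply, Set.mem_Iio,
    EReal.coe_lt_coe_iff, Pi.one_apply]
  refine Finset.measurable_sum _ fun k' _ => Measurable.of_nat_index
    ((measurable_fst.comp (measurable_pi_apply k')))
    (F := fun m d => ∑ i ∈ range m, (((K - K₀ + 1 : ℕ) : ℝ≥0∞) * m)⁻¹ *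
      if S d ((d k').2 i) < S d ((d k).2 j) then 1 else 0) fun m => ?_
  exact Finset.measurable_sum _ fun i _ => measurable_const.mul (Measurable.ite
    (measurableSet_lt (measurable_score hS k' i) (measurable_score hS k j))
    measurable_const measurable_const)

theorem measurable_highRankFraction (β : ℝ≥0∞) (k : Fin (K + 1)) :
    Measurable (highRankFraction (K₀ := K₀) S β k) :=
  Measurable.of_nat_index (measurable_fst.comp (measurable_pi_apply k))
    (F := fun m d => (m : ℝ≥0∞)⁻¹ * ∑ j ∈ range m, (highRankSet (K₀ := K₀) S β k j).indicator 1 d)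
    fun _ => measurable_const.mul (Finset.measurable_sum _ fun j _ =>
      measurable_const.indicator (measurableSet_highRankSet hS β k j))

end Measurability

theorem measure_highRankSet_le {𝒵 : Type*} [MeasurableSpace 𝒵] {K₀ K : ℕ} (hK₀ : K₀ ≤ K)
    (Q : Measure (Fin (K + 1) → ℕ × (ℕ → 𝒵))) [IsProbabilityMeasure Q]
    (hQperm : ∀ σ : Equiv.Perm (Fin (K + 1)), Q.map (· ∘ σ) = Q)
    (hQwithin : ∀ m (τ : Equiv.Perm (Fin m)),
      (Q.restrict {d | (d (Fin.last K)).1 = m}).map (permuteWithin τ (Fin.last K))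
        = Q.restrict {d | (d (Fin.last K)).1 = m})
    (hQpos : Q {d | (d (Fin.last K)).1 = 0} = 0)
    {S : (Fin (K + 1) → ℕ × (ℕ → 𝒵)) → 𝒵 → ℝ}
    (hS : Measurable fun p : (Fin (K + 1) → ℕ × (ℕ → 𝒵)) × 𝒵 => S p.1 p.2)
    (hSperm : ∀ σ : Equiv.Perm (Fin (K + 1)), (∀ j : Fin (K + 1), (j : ℕ) < K₀ → σ j = j) →
      ∀ d, S (d ∘ σ) = S d)
    (hSwithin : ∀ m (τ : Equiv.Perm (Fin m)) d, S (permuteWithin τ (Fin.last K) d) = S d)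
    (β : ℝ≥0∞) :
    Q (highRankSet (K₀ := K₀) S β (Fin.last K) 0) ≤ 1 - β := by
  set B := highRankSet (K₀ := K₀) S β (Fin.last K)
  set F := highRankFraction (K₀ := K₀) S β
  set c : ℝ≥0∞ := ((K - K₀ + 1 : ℕ) : ℝ≥0∞)
  have hB : ∀ j, MeasurableSet (B j) := measurableSet_highRankSet hS β _
  have hwithin : ∀ m, ∀ j < m, Q (B j ∩ {d | (d (Fin.last K)).1 = m})
      = Q (B 0 ∩ {d | (d (Fin.last K)).1 = m}) := by
    intro m j hj
    set τ := Equiv.swap (⟨0, by omega⟩ : Fin m) ⟨j, hj⟩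
    have hτ : permExt τ 0 = j := by simp [permExt, τ, show 0 < m by omega]
    have hpre : permuteWithin τ (Fin.last K) ⁻¹' B 0 ∩ {d | (d (Fin.last K)).1 = m}
        = B j ∩ {d | (d (Fin.last K)).1 = m} := by
      ext d
      simp only [Set.mem_inter_iff, Set.mem_preimage, Set.mem_ofPred_eq, and_congr_left_iff]
      intro hm
      rw [permuteWithin_mem_highRankSet_iff τ hm (hSwithin m τ d), hτ]
    rw [← hpre, ← Measure.restrict_apply' (measurableSet_size_eq _ m),
      ← Measure.restrict_apply' (measurableSet_size_eq _ m),
      ← Measure.map_apply (measurable_permuteWithin τ _) (hB 0), hQwithin]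
  have hswap : ∀ k ∈ heldOutGroups K₀ (K + 1), ∫⁻ d, F k d ∂Q = ∫⁻ d, F (Fin.last K) d ∂Q := by
    intro k hk
    set σ := Equiv.swap k (Fin.last K)
    have hσ : ∀ j : Fin (K + 1), (j : ℕ) < K₀ → σ j = j := fun j hj =>
      Equiv.swap_apply_of_ne_of_ne (Fin.ne_of_lt (by simp_all [heldOutGroups]; omega))
        (Fin.ne_of_lt (by simp [Fin.lt_def]; omega))
    calc ∫⁻ d, F k d ∂Q = ∫⁻ d, F (σ (Fin.last K)) d ∂Q := by rw [Equiv.swap_apply_right]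
      _ = ∫⁻ d, F (Fin.last K) (d ∘ σ) ∂Q := by
          simp only [F, highRankFraction_comp_perm hσ (hSperm σ hσ _)]
      _ = ∫⁻ d, F (Fin.last K) d ∂Q.map (· ∘ σ) :=
          (lintegral_map (measurable_highRankFraction hS β _) (measurable_comp_perm σ)).symm
      _ = ∫⁻ d, F (Fin.last K) d ∂Q := by rw [hQperm]
  calc Q (B 0) = ∫⁻ d, F (Fin.last K) d ∂Q := by
        rw [← lintegral_indicator_one (hB 0)]
        refine (lintegral_inv_mul_sum_range_eq Q (n := fun d => (d (Fin.last K)).1)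
          (f := fun j => (B j).indicator 1) (measurable_fst.comp (measurable_pi_apply _))
          hQpos (fun j => measurable_const.indicator (hB j)) fun m j hj => ?_).symm
        rw [lintegral_indicator_one (hB j), lintegral_indicator_one (hB 0),
          Measure.restrict_apply (hB j), Measure.restrict_apply (hB 0)]
        exact hwithin m j hj
    _ = ∑ k ∈ heldOutGroups K₀ (K + 1), c⁻¹ * ∫⁻ d, F k d ∂Q := by
        rw [sum_congr rfl fun k hk => by rw [hswap k hk], sum_const, card_heldOutGroups,
          nsmul_eq_mul, ← mul_assoc, show K + 1 - K₀ = K - K₀ + 1 by omega,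
          ENNReal.mul_inv_cancel (by positivity) (ENNReal.natCast_ne_top _), one_mul]
    _ = ∫⁻ d, ∑ k ∈ heldOutGroups K₀ (K + 1), c⁻¹ * F k d ∂Q := by
        rw [lintegral_finsetSum _ fun k _ => (measurable_highRankFraction hS β k).const_mul _]
        simp only [lintegral_const_mul _ (measurable_highRankFraction hS β _)]
        rfl
    _ ≤ ∫⁻ _, 1 - β ∂Q := lintegral_mono fun d => sum_highRankFraction_le S β d
    _ = 1 - β := by simp

section TrainingScore

variable {𝒵 : Type*} {K₀ L : ℕ}

def trainingScore (A : (Fin K₀ → ℕ × (ℕ → 𝒵)) → 𝒵 → ℝ) (h : K₀ ≤ L)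
    (d : Fin L → ℕ × (ℕ → 𝒵)) : 𝒵 → ℝ :=
  A fun j => d (Fin.castLE h j)

variable {A : (Fin K₀ → ℕ × (ℕ → 𝒵)) → 𝒵 → ℝ} {h : K₀ ≤ L} {d : Fin L → ℕ × (ℕ → 𝒵)}

theorem trainingScore_comp_perm {σ : Equiv.Perm (Fin L)}
    (hσ : ∀ j : Fin L, (j : ℕ) < K₀ → σ j = j) :
    trainingScore A h (d ∘ σ) = trainingScore A h d :=
  congrArg A (funext fun j => congrArg d (hσ _ j.2))

theorem trainingScore_permuteWithin {m : ℕ} (τ : Equiv.Perm (Fin m)) {k : Fin L}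
    (hk : K₀ ≤ k) : trainingScore A h (permuteWithin τ k d) = trainingScore A h d :=
  congrArg A (funext fun j =>
    Function.update_of_ne (a := Fin.castLE h j) (a' := k)
      (Fin.ne_of_lt (Fin.lt_def.2 (lt_of_lt_of_le j.2 hk))) _ d)

theorem measurable_trainingScore [MeasurableSpace 𝒵]
    (hA : Measurable fun p : (Fin K₀ → ℕ × (ℕ → 𝒵)) × 𝒵 => A p.1 p.2) :
    Measurable fun p : (Fin L → ℕ × (ℕ → 𝒵)) × 𝒵 => trainingScore A h p.1 p.2 :=
  hA.comp (f := fun p : (Fin L → ℕ × (ℕ → 𝒵)) × 𝒵 => (fun j => p.1 (Fin.castLE h j), p.2))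
    ((measurable_pi_lambda _ fun j => (measurable_pi_apply (Fin.castLE h j)).comp
      measurable_fst).prodMk measurable_snd)

end TrainingScore

theorem coe_le_hcpThreshold {α : ℝ} {K₀ K : ℕ} {n : ℕ → ℕ} {s : ℕ → ℕ → ℝ} {x : ℝ}
    (h : scoreMeasure (K - K₀ + 1) (Finset.Ico K₀ (K + 1)) n s (Iio x)
      < ENNReal.ofReal (1 - α)) :
    (x : EReal) ≤ hcpThreshold α K₀ K n s := by
  refine le_erealQuantile_of_measure_Iio_lt (lt_of_le_of_lt ?_ h)
  change (scoreMeasure (K - K₀ + 1) (Finset.Ico K₀ K) n s + _) (Iio x) ≤ _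
  rw [Measure.add_apply, Measure.smul_apply, Measure.dirac_apply,
    indicator_of_notMem (by simp : (⊤ : EReal) ∉ Iio (x : EReal)), smul_zero, add_zero]
  exact scoreMeasure_apply_mono _ _ _ (Finset.Ico_subset_Ico_right K.le_succ) _

theorem hcp_marginal_coverage_lower_general
    {𝒳 𝒴 Ω : Type*} [MeasurableSpace 𝒳] [MeasurableSpace 𝒴] [MeasurableSpace Ω]
    (P : Measure Ω) [IsProbabilityMeasure P]
    (K K₀ : ℕ) (hK₀ : K₀ ≤ K)
    (N : ℕ → Ω → ℕ) (Z : ℕ → ℕ → Ω → 𝒳 × 𝒴)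
    (hN : ∀ k ω, 1 ≤ N k ω)
    (hNmeas : ∀ k, Measurable (N k)) (hZmeas : ∀ k i, Measurable (Z k i))
    (hexch : HierExch (K + 1) P N Z)
    (α : ℝ) (hα₀ : 0 < α)
    (A : (Fin K₀ → ℕ × (ℕ → 𝒳 × 𝒴)) → 𝒳 × 𝒴 → ℝ)
    (hA : Measurable fun p : (Fin K₀ → ℕ × (ℕ → 𝒳 × 𝒴)) × (𝒳 × 𝒴) => A p.1 p.2) :
    ENNReal.ofReal (1 - α) ≤
      P {ω | (A (hierData K₀ N Z ω) (Z K 0 ω) : EReal)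
          ≤ hcpThreshold α K₀ K (fun k => N k ω)
              fun k i => A (hierData K₀ N Z ω) (Z k i ω)} := by
  set β := ENNReal.ofReal (1 - α)
  set H := hierData (K + 1) N Z
  have hH : Measurable H := measurable_hierData hNmeas hZmeas
  set Q := P.map H
  have : IsProbabilityMeasure Q := Measure.isProbabilityMeasure_map hH.aemeasurable
  set S := trainingScore A (show K₀ ≤ K + 1 by omega)
  set B := highRankSet (K₀ := K₀) S β (Fin.last K) 0
  have hB : MeasurableSet B := measurableSet_highRankSet (measurable_trainingScore hA) β _ 0
  have hQpos : Q {d | (d (Fin.last K)).1 = 0} = 0 := by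
    rw [Measure.map_apply hH (measurableSet_size_eq _ 0)]
    exact measure_mono_null (fun ω (hω : N K ω = 0) => by have := hN K ω; omega) measure_empty
  have hbad : Q B ≤ 1 - β :=
    measure_highRankSet_le hK₀ Q (hexch.map_comp_perm hNmeas hZmeas)
      (hexch.map_restrict_permuteWithin hNmeas hZmeas _) hQpos (measurable_trainingScore hA)
      (fun _ hσ _ => trainingScore_comp_perm hσ) (fun _ τ _ => trainingScore_permuteWithin τ hK₀) β
  have hcover : H ⁻¹' Bᶜ ⊆ {ω | (A (hierData K₀ N Z ω) (Z K 0 ω) : EReal)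
      ≤ hcpThreshold α K₀ K (fun k => N k ω) fun k i => A (hierData K₀ N Z ω) (Z k i ω)} :=
    fun ω hω => coe_le_hcpThreshold (by
      rw [← map_val_heldOutGroups, scoreMeasure_map]
      exact not_le.1 hω)
  have hβ : β ≤ 1 := ENNReal.ofReal_le_one.2 (by linarith)
  calc β = 1 - (1 - β) := (ENNReal.sub_sub_cancel ENNReal.one_ne_top hβ).symm
    _ ≤ 1 - Q B := tsub_le_tsub_left hbad 1
    _ = Q Bᶜ := (prob_compl_eq_one_sub hB).symm
    _ = P (H ⁻¹' Bᶜ) := Measure.map_apply hH hB.compl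
    _ ≤ _ := measure_mono hcover

/-- **Theorem (Marginal coverage for HCP, lower bound).**
If the groups `Z̃_0, …, Z̃_K` are hierarchically exchangeable, the HCP prediction set at
level `α` is built from training groups `0, …, K₀-1` (used to fit the score via the
algorithm `A`) and calibration groups `K₀, …, K-1`, and the test point is the first
observation `Z K 0` of group `K`, then `P(Y_test ∈ Ĉ(X_test)) ≥ 1 - α`. -/
theorem hcp_marginal_coverage_lower
    {𝒳 𝒴 Ω : Type*} [MeasurableSpace 𝒳] [MeasurableSpace 𝒴] [MeasurableSpace Ω]
    (P : Measure Ω) [IsProbabilityMeasure P]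
    (K K₀ : ℕ) (hK₀ : K₀ ≤ K)
    (N : ℕ → Ω → ℕ) (Z : ℕ → ℕ → Ω → 𝒳 × 𝒴)
    (hN : ∀ k ω, 1 ≤ N k ω)
    (hNmeas : ∀ k, Measurable (N k)) (hZmeas : ∀ k i, Measurable (Z k i))
    (hexch : HierExch (K + 1) P N Z)
    (α : ℝ) (hα₀ : 0 < α) (hα₁ : α < 1)
    (A : (Fin K₀ → ℕ × (ℕ → 𝒳 × 𝒴)) → 𝒳 × 𝒴 → ℝ)
    (hA : Measurable fun p : (Fin K₀ → ℕ × (ℕ → 𝒳 × 𝒴)) × (𝒳 × 𝒴) => A p.1 p.2) :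
    ENNReal.ofReal (1 - α) ≤
      P {ω | (A (hierData K₀ N Z ω) (Z K 0 ω) : EReal)
          ≤ hcpThreshold α K₀ K (fun k => N k ω)
              fun k i => A (hierData K₀ N Z ω) (Z k i ω)} :=
  hcp_marginal_coverage_lower_general P K K₀ hK₀ N Z hN hNmeas hZmeas hexch α hα₀ A hA
end
end

section
/- Equivalence of Pooling CDFs and HCP (deterministic quantile identity): For any real numbers s(Z_{k,i}) indexed by calibration groups k = K₀+1,…,K with group sizes N_k ≥ 1, and any α ∈ (0,1), the Pooling CDFs threshold T = inf{t : (1/K₁) Σ_{k=K₀+1}^{K} (1/N_k) Σ_{i=1}^{N_k} 1{s(Z_{k,i}) ≤ t} ≥ 1−α} (where K₁ = K − K₀) is equal to Q_{1−α'}( Σ_{k=K₀+1}^{K} Σ_{i=1}^{N_k} (1/((K₁+1)N_k)) δ_{s(Z_{k,i})} + (1/(K₁+1)) δ_{+∞} ), the HCP threshold computed at level α' = α + (1−α)/(K₁+1). -/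
open MeasureTheory ProbabilityTheory
open scoped ENNReal

noncomputable section

/-- **Proposition (Pooling CDFs = HCP at a shifted level).**
For any scores `sc k i` over calibration groups `K₀, …, K-1` with group sizes `n k ≥ 1`
and any `α ∈ (0,1)`, the Pooling-CDFs threshold, i.e. the `(1-α)`-quantile of the pooled
empirical distribution `Σ_k Σ_i (1/(K₁·(n k))) δ_{sc k i}`, coincides with the HCP
threshold at level `α' = α + (1-α)/(K₁+1)`, i.e. the `(1-α')`-quantile of
`Σ_k Σ_i (1/((K₁+1)·(n k))) δ_{sc k i} + (1/(K₁+1)) δ_{+∞}`, where `K₁ = K - K₀`. -/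
theorem pooling_cdfs_eq_hcp
    (K K₀ : ℕ) (hK₀ : K₀ < K)
    (n : ℕ → ℕ) (hn : ∀ k, 1 ≤ n k)
    (sc : ℕ → ℕ → ℝ)
    (α : ℝ) (hα₀ : 0 < α) (hα₁ : α < 1) :
    erealQuantile (1 - α)
        (∑ k ∈ Finset.Ico K₀ K, ∑ i ∈ Finset.range (n k),
          (((K - K₀ : ℕ) : ℝ≥0∞) * (n k : ℝ≥0∞))⁻¹ • Measure.dirac ((sc k i : EReal)))
      = erealQuantile (1 - (α + (1 - α) / (((K - K₀ : ℕ) : ℝ) + 1)))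
          ((∑ k ∈ Finset.Ico K₀ K, ∑ i ∈ Finset.range (n k),
              (((K - K₀ + 1 : ℕ) : ℝ≥0∞) * (n k : ℝ≥0∞))⁻¹
                • Measure.dirac ((sc k i : EReal)))
            + (((K - K₀ + 1 : ℕ) : ℝ≥0∞))⁻¹ • Measure.dirac (⊤ : EReal)) := by
  set m : ℕ := K - K₀ with hm
  have hmpos : 0 < m := Nat.sub_pos_of_lt hK₀
  have hmne : (m : ℝ≥0∞) ≠ 0 := Nat.cast_ne_zero.mpr hmpos.ne'
  have hmtop : (m : ℝ≥0∞) ≠ ⊤ := ENNReal.natCast_ne_top _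
  have hden_ne : ((m : ℝ≥0∞) + 1) ≠ 0 := by simp
  have hden_top : ((m : ℝ≥0∞) + 1) ≠ ⊤ := by
    simp [ENNReal.add_ne_top, hmtop]
  set c : ℝ≥0∞ := (m : ℝ≥0∞) / ((m : ℝ≥0∞) + 1) with hc
  have hc0 : c ≠ 0 := by
    rw [hc]
    exact (ENNReal.div_pos hmne hden_top).ne'
  have hctop : c ≠ ⊤ := (ENNReal.div_lt_top hmtop hden_ne).ne
  have hnne : ∀ k, ((n k : ℝ≥0∞)) ≠ 0 := fun k => Nat.cast_ne_zero.mpr (Nat.one_le_iff_ne_zero.mp (hn k))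
  have hntop : ∀ k, ((n k : ℝ≥0∞)) ≠ ⊤ := fun k => ENNReal.natCast_ne_top _
  -- coefficient identity
  have hcoef : ∀ k, (((m + 1 : ℕ) : ℝ≥0∞) * (n k : ℝ≥0∞))⁻¹
      = c * ((m : ℝ≥0∞) * (n k : ℝ≥0∞))⁻¹ := by
    intro k
    push_cast
    rw [ENNReal.mul_inv (Or.inl hden_ne) (Or.inl hden_top),
      ENNReal.mul_inv (Or.inl hmne) (Or.inl hmtop), hc, div_eq_mul_inv]
    rw [show (m : ℝ≥0∞) * ((m : ℝ≥0∞) + 1)⁻¹ * ((m : ℝ≥0∞)⁻¹ * ((n k : ℝ≥0∞))⁻¹)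
        = ((m : ℝ≥0∞) * (m : ℝ≥0∞)⁻¹) * (((m : ℝ≥0∞) + 1)⁻¹ * ((n k : ℝ≥0∞))⁻¹) by ring]
    rw [ENNReal.mul_inv_cancel hmne hmtop, one_mul]
  -- level identity
  have hlevel : ENNReal.ofReal (1 - (α + (1 - α) / (((m : ℕ) : ℝ) + 1)))
      = c * ENNReal.ofReal (1 - α) := by
    have hden' : ((m : ℝ) + 1) ≠ 0 := by positivity
    have h1 : 1 - (α + (1 - α) / ((m : ℝ) + 1)) = ((m : ℝ) / ((m : ℝ) + 1)) * (1 - α) := by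
      field_simp
      ring
    rw [h1, ENNReal.ofReal_mul (by positivity),
      ENNReal.ofReal_div_of_pos (by positivity)]
    congr 2
    · exact ENNReal.ofReal_natCast m
    · rw [ENNReal.ofReal_add (by positivity) zero_le_one, ENNReal.ofReal_natCast,
        ENNReal.ofReal_one]
  unfold erealQuantile
  congr 1
  ext t
  simp only [Set.mem_setOf_eq]
  have hIic : MeasurableSet (Set.Iic t) := measurableSet_Iic
  rw [Measure.add_apply, Measure.smul_apply, Measure.dirac_apply' _ hIic]
  rw [Measure.finset_sum_apply, Measure.finset_sum_apply]
  simp only [Measure.finset_sum_apply, Measure.smul_apply,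
    Measure.dirac_apply' _ hIic, smul_eq_mul]
  simp only [hcoef, mul_assoc]
  rw [hlevel]
  set S : ℝ≥0∞ := ∑ k ∈ Finset.Ico K₀ K, ∑ i ∈ Finset.range (n k),
    ((m : ℝ≥0∞) * (n k : ℝ≥0∞))⁻¹ * Set.indicator (Set.Iic t) 1 ((sc k i : ℝ) : EReal) with hS
  have hfac : (∑ k ∈ Finset.Ico K₀ K, ∑ i ∈ Finset.range (n k),
      c * (((m : ℝ≥0∞) * (n k : ℝ≥0∞))⁻¹ * Set.indicator (Set.Iic t) 1 ((sc k i : ℝ) : EReal)))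
      = c * S := by
    rw [hS, Finset.mul_sum]
    exact Finset.sum_congr rfl fun k _ => (Finset.mul_sum _ _ _).symm
  rw [hfac]
  by_cases ht : t = ⊤
  · -- both sides hold
    have hindtop : Set.indicator (Set.Iic t) (1 : EReal → ℝ≥0∞) ⊤ = 1 := by
      simp [ht]
    have hS1 : S = 1 := by
      rw [hS]
      have hind : ∀ k i, Set.indicator (Set.Iic t) (1 : EReal → ℝ≥0∞) ((sc k i : ℝ) : EReal)
          = 1 := by
        intro k i; simp [ht]
      simp only [hind, mul_one]
      have hinner : ∀ k, ∑ _i ∈ Finset.range (n k), ((m : ℝ≥0∞) * (n k : ℝ≥0∞))⁻¹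
          = (m : ℝ≥0∞)⁻¹ := by
        intro k
        rw [Finset.sum_const, Finset.card_range, nsmul_eq_mul,
          ENNReal.mul_inv (Or.inl hmne) (Or.inl hmtop)]
        rw [show (n k : ℝ≥0∞) * ((m : ℝ≥0∞)⁻¹ * ((n k : ℝ≥0∞))⁻¹)
            = ((n k : ℝ≥0∞) * ((n k : ℝ≥0∞))⁻¹) * (m : ℝ≥0∞)⁻¹ by ring]
        rw [ENNReal.mul_inv_cancel (hnne k) (hntop k), one_mul]
      simp only [hinner, Finset.sum_const, Nat.card_Ico, nsmul_eq_mul, ← hm]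
      exact ENNReal.mul_inv_cancel hmne hmtop
    rw [hS1, hindtop, mul_one, mul_one]
    constructor
    · intro _
      calc c * ENNReal.ofReal (1 - α) ≤ c * 1 :=
            mul_le_mul_right (ENNReal.ofReal_le_one.mpr (by linarith)) c
        _ = c := mul_one c
        _ ≤ c + ((m + 1 : ℕ) : ℝ≥0∞)⁻¹ := le_self_add
    · intro _
      exact ENNReal.ofReal_le_one.mpr (by linarith)
  · -- top indicator is zero
    have hindtop : Set.indicator (Set.Iic t) (1 : EReal → ℝ≥0∞) ⊤ = 0 := by
      simp [Set.indicator_apply, Set.mem_Iic, top_le_iff, ht, Ne.symm ht]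
    rw [hindtop, mul_zero, add_zero]
    exact (ENNReal.mul_le_mul_iff_right hc0 hctop).symm
end
end
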